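/- arXiv:2210.03811 — 6 statements merged into one kernel-verified Lean document; each statement's English description precedes it below -/
import Mathlib

section
/- For every integer k ≥ 1, the partial sum of reciprocals of successors satisfies Σ_{i=1}^{k} 1/(u_i + 1) = 1 − 1/u_{k+1} (as real numbers); equivalently, 1/u_{k+1} = 1 − Σ_{i=1}^{k} 1/(u_i + 1). -/
/-!
Since `u (i+1) = u i * (u i + 1)`, partial fractions give
`1 / (u i + 1) = 1 / u i - 1 / u (i+1)`, so the sum telescopes to `1 / u 1 - 1 / u (k+1)`.
-/

theorem pos_of_eq_mul_succ (u : ℕ → ℕ) (m : ℕ) (hm : 0 < u m)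
    (hu : ∀ k, m ≤ k → u (k + 1) = u k * (u k + 1)) : ∀ k, m ≤ k → 0 < u k := by
  intro k hk
  induction k, hk using Nat.le_induction with
  | base => exact hm
  | succ k hk ih => rw [hu k hk]; positivity

theorem one_div_add_one_eq_sub {K : Type*} [Field K] {x : K} (hx : x ≠ 0) (hx1 : x + 1 ≠ 0) :
    1 / (x + 1) = 1 / x - 1 / (x * (x + 1)) := by
  field_simp
  ring

/-- The sequence `u` of positive integers is defined by `u 1 = 1` and
`u (k+1) = u k * (u k + 1)` for `k ≥ 1`.  For every integer `k ≥ 1`,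
`∑_{i=1}^{k} 1/(u i + 1) = 1 - 1/u (k+1)` as real numbers. -/
theorem sum_reciprocal_succ_eq (u : ℕ → ℕ) (hu1 : u 1 = 1)
    (hu : ∀ k, 1 ≤ k → u (k + 1) = u k * (u k + 1)) :
    ∀ k, 1 ≤ k →
      ∑ i ∈ Finset.Icc 1 k, (1 : ℝ) / (u i + 1) = 1 - 1 / u (k + 1) := by
  intro k hk
  have hpos := pos_of_eq_mul_succ u 1 (by rw [hu1]; exact one_pos) hu
  calc ∑ i ∈ Finset.Icc 1 k, (1 : ℝ) / (u i + 1)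
      = ∑ i ∈ Finset.Icc 1 k, (1 / (u i : ℝ) - 1 / u (i + 1)) := by
        refine Finset.sum_congr rfl fun i hi => ?_
        have hi1 : 1 ≤ i := (Finset.mem_Icc.mp hi).1
        rw [hu i hi1, Nat.cast_mul, Nat.cast_succ]
        exact one_div_add_one_eq_sub (by exact_mod_cast (hpos i hi1).ne') (by positivity)
    _ = 1 / u 1 - 1 / u (k + 1) := by
        simpa [neg_add_eq_sub] using Finset.sum_Icc_sub hk fun i => -(1 / (u i : ℝ))
    _ = 1 - 1 / u (k + 1) := by rw [hu1, Nat.cast_one, div_one]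
end

section
/- The value α := Σ_{k=1}^{∞} 1/u_k satisfies 1.69103 < α < 1.69104. -/
/-!
The sequence at least doubles at every step, so the tail of `∑ 1/u k` starting at `u n` is
at most `2 / u n`. Six exact terms give `1.69103 < S ≤ α`, and the tail from `u 7 ≈ 1.07 · 10¹³`
adds less than `2 · 10⁻¹³`.
-/

section Doubling

variable {b : ℕ → ℝ}

theorem two_pow_mul_le_of_two_mul_le (hb : ∀ k, 2 * b k ≤ b (k + 1)) (k : ℕ) :
    2 ^ k * b 0 ≤ b k := by
  induction k with
  | zero => simp
  | succ k ih =>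
    calc 2 ^ (k + 1) * b 0 = 2 * (2 ^ k * b 0) := by ring
      _ ≤ 2 * b k := by gcongr
      _ ≤ b (k + 1) := hb k

theorem pos_of_two_mul_le (hb0 : 0 < b 0) (hb : ∀ k, 2 * b k ≤ b (k + 1)) (k : ℕ) :
    0 < b k :=
  (by positivity : (0 : ℝ) < 2 ^ k * b 0).trans_le (two_pow_mul_le_of_two_mul_le hb k)

theorem one_div_le_of_two_mul_le (hb0 : 0 < b 0) (hb : ∀ k, 2 * b k ≤ b (k + 1)) (k : ℕ) :
    1 / b k ≤ 1 / b 0 * (1 / 2) ^ k := by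
  rw [div_pow, one_pow, div_mul_div_comm, one_mul, mul_comm]
  exact one_div_le_one_div_of_le (by positivity) (two_pow_mul_le_of_two_mul_le hb k)

theorem summable_one_div_of_two_mul_le (hb0 : 0 < b 0) (hb : ∀ k, 2 * b k ≤ b (k + 1)) :
    Summable fun k => 1 / b k :=
  .of_nonneg_of_le (fun k => (one_div_pos.2 (pos_of_two_mul_le hb0 hb k)).le)
    (one_div_le_of_two_mul_le hb0 hb) (summable_geometric_two.mul_left _)

theorem tsum_one_div_le_of_two_mul_le (hb0 : 0 < b 0) (hb : ∀ k, 2 * b k ≤ b (k + 1)) :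
    ∑' k, 1 / b k ≤ 2 / b 0 :=
  calc ∑' k, 1 / b k ≤ ∑' k, 1 / b 0 * (1 / 2 : ℝ) ^ k :=
        (summable_one_div_of_two_mul_le hb0 hb).tsum_le_tsum (one_div_le_of_two_mul_le hb0 hb)
          (summable_geometric_two.mul_left _)
    _ = 2 / b 0 := by rw [tsum_mul_left, tsum_geometric_two, one_div_mul_eq_div]

end Doubling

section Sylvester

variable {a : ℕ → ℕ} (ha : ∀ k, a (k + 1) = a k * (a k + 1)) (ha0 : 0 < a 0)
include ha ha0

theorem pos_of_mul_succ_rec (k : ℕ) : 0 < a k := by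
  induction k with
  | zero => exact ha0
  | succ k ih => rw [ha]; positivity

theorem two_mul_le_of_mul_succ_rec (k : ℕ) : 2 * (a k : ℝ) ≤ a (k + 1) := by
  have hk : (1 : ℝ) ≤ a k := by exact_mod_cast pos_of_mul_succ_rec ha ha0 k
  rw [ha]
  push_cast
  nlinarith

theorem summable_one_div_of_mul_succ_rec : Summable fun k => 1 / (a k : ℝ) :=
  summable_one_div_of_two_mul_le (by exact_mod_cast ha0) (two_mul_le_of_mul_succ_rec ha ha0)

theorem tsum_one_div_add_le_of_mul_succ_rec (n : ℕ) :
    ∑' k, 1 / (a (k + n) : ℝ) ≤ 2 / a n := by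
  simpa using tsum_one_div_le_of_two_mul_le (b := fun k => (a (k + n) : ℝ))
    (by simpa using pos_of_mul_succ_rec ha ha0 n)
    (fun k => by simpa [Nat.add_right_comm] using two_mul_le_of_mul_succ_rec ha ha0 (k + n))

end Sylvester

/-- The sequence `u` of positive integers is defined by `u 1 = 1` and
`u (k+1) = u k * (u k + 1)` for `k ≥ 1`.  The value
`α := ∑_{k=1}^{∞} 1/u k` satisfies `1.69103 < α < 1.69104`. -/
theorem alpha_bounds (u : ℕ → ℕ) (hu1 : u 1 = 1)
    (hu : ∀ k, 1 ≤ k → u (k + 1) = u k * (u k + 1)) :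
    1.69103 < ∑' k : ℕ, (1 : ℝ) / u (k + 1) ∧
      ∑' k : ℕ, (1 : ℝ) / u (k + 1) < 1.69104 := by
  set v : ℕ → ℕ := fun k => u (k + 1)
  have hv0 : v 0 = 1 := hu1
  have hv : ∀ k, v (k + 1) = v k * (v k + 1) := fun k => hu (k + 1) k.succ_pos
  have hv_pos : 0 < v 0 := hv0 ▸ one_pos
  rw [← (summable_one_div_of_mul_succ_rec hv hv_pos).sum_add_tsum_nat_add 6]
  have head : ∑ i ∈ Finset.range 6, (1 : ℝ) / v i
      = 1 + 1 / 2 + 1 / 6 + 1 / 42 + 1 / 1806 + 1 / 3263442 := by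
    simp [Finset.sum_range_succ, hv, hv0]
  have tail_nonneg : 0 ≤ ∑' k, (1 : ℝ) / v (k + 6) := tsum_nonneg fun k => by positivity
  have tail_le := tsum_one_div_add_le_of_mul_succ_rec hv hv_pos 6
  have hv6 : v 6 = 10650056950806 := by simp [hv, hv0]
  rw [hv6, Nat.cast_ofNat] at tail_le
  rw [head]
  constructor <;> linarith
end

section
/- Let M ≥ 2 be an integer and let k ≥ 1 be the index with u_k < M ≤ u_{k+1}. Then Σ_{i=1}^{k} 1/u_i + M/((M − 1)·u_{k+1}) ≤ α + 1/(M − 1), where α := Σ_{i=1}^{∞} 1/u_i. -/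
/-!
The finite sum up to `k + 1` is a partial sum of the positive series `α`, so it is at most `α`;
and `M / ((M - 1) u) = 1 / u + 1 / ((M - 1) u) ≤ 1 / u + 1 / (M - 1)` since `u ≥ 1`.
The series converges because `u (i + 1) ≥ 2 ^ i`.
-/

theorem two_pow_le_of_sylvester_rec {u : ℕ → ℕ} (hu1 : u 1 = 1)
    (hu : ∀ k, 1 ≤ k → u (k + 1) = u k * (u k + 1)) (i : ℕ) : 2 ^ i ≤ u (i + 1) := by
  induction i with
  | zero => simp [hu1]
  | succ n ih =>
    rw [hu (n + 1) (by omega), pow_succ]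
    exact Nat.mul_le_mul ih (by have := Nat.one_le_two_pow.trans ih; omega)

theorem summable_one_div_of_two_pow_le {v : ℕ → ℕ} (hv : ∀ i, 2 ^ i ≤ v i) :
    Summable fun i => (1 : ℝ) / v i := by
  refine Summable.of_nonneg_of_le (fun i => by positivity) (fun i => ?_)
    summable_geometric_two
  rw [one_div, one_div, inv_pow]
  exact inv_anti₀ (by positivity) (by exact_mod_cast hv i)

theorem sum_Icc_one_eq_sum_range_succ {M : Type*} [AddCommMonoid M] (f : ℕ → M) (n : ℕ) :
    ∑ i ∈ Finset.Icc 1 n, f i = ∑ i ∈ Finset.range n, f (i + 1) := by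
  induction n with
  | zero => simp
  | succ n ih => rw [Finset.sum_Icc_succ_top (by omega), ih, Finset.sum_range_succ]

theorem sum_Icc_one_le_tsum {f : ℕ → ℝ} (hf : ∀ i, 0 ≤ f i) (hs : Summable fun i => f (i + 1))
    (n : ℕ) : ∑ i ∈ Finset.Icc 1 n, f i ≤ ∑' i, f (i + 1) := by
  rw [sum_Icc_one_eq_sum_range_succ]
  exact hs.sum_le_tsum _ fun i _ => hf (i + 1)

theorem div_sub_one_mul_le_one_div_add_one_div {m b : ℝ} (hm : 1 < m) (hb : 1 ≤ b) :
    m / ((m - 1) * b) ≤ 1 / b + 1 / (m - 1) := by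
  have hm' : 0 < m - 1 := by linarith
  have hb' : 0 < b := by linarith
  rw [div_add_div _ _ hb'.ne' hm'.ne', div_le_div_iff₀ (by positivity) (by positivity)]
  nlinarith [mul_nonneg (mul_nonneg hm'.le hb'.le) (sub_nonneg.mpr hb)]

theorem lee_lee_ratio_bound_general (u : ℕ → ℕ) (hu1 : u 1 = 1)
    (hu : ∀ k, 1 ≤ k → u (k + 1) = u k * (u k + 1))
    (M k : ℕ) (hM : 2 ≤ M) :
    ∑ i ∈ Finset.Icc 1 k, (1 : ℝ) / u i + M / ((M - 1) * u (k + 1)) ≤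
      (∑' i : ℕ, (1 : ℝ) / u (i + 1)) + 1 / (M - 1) := by
  have hgrow := two_pow_le_of_sylvester_rec hu1 hu
  have hpartial := sum_Icc_one_le_tsum (f := fun i => (1 : ℝ) / u i) (fun i => by positivity)
    (summable_one_div_of_two_pow_le hgrow) (k + 1)
  rw [Finset.sum_Icc_succ_top (by omega)] at hpartial
  have hlast := div_sub_one_mul_le_one_div_add_one_div (m := M) (b := u (k + 1))
    (by exact_mod_cast hM) (by exact_mod_cast Nat.one_le_two_pow.trans (hgrow k))
  linarith

/-- The sequence `u` of positive integers is defined by `u 1 = 1` and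
`u (k+1) = u k * (u k + 1)` for `k ≥ 1`.  Let `M ≥ 2` be an integer and let
`k ≥ 1` be the index with `u k < M ≤ u (k+1)`.  Then
`∑_{i=1}^{k} 1/u i + M/((M-1)·u (k+1)) ≤ α + 1/(M-1)`, where
`α := ∑_{i=1}^{∞} 1/u i`. -/
theorem lee_lee_ratio_bound (u : ℕ → ℕ) (hu1 : u 1 = 1)
    (hu : ∀ k, 1 ≤ k → u (k + 1) = u k * (u k + 1))
    (M k : ℕ) (hM : 2 ≤ M) (hk : 1 ≤ k)
    (hukM : u k < M) (hMuk : M ≤ u (k + 1)) :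
    ∑ i ∈ Finset.Icc 1 k, (1 : ℝ) / u i + M / ((M - 1) * u (k + 1)) ≤
      (∑' i : ℕ, (1 : ℝ) / u (i + 1)) + 1 / (M - 1) :=
  lee_lee_ratio_bound_general u hu1 hu M k hM
end

section
/- Let a_1, …, a_n ∈ [0,1] be item sizes, let M ≥ 1 be an integer, and let f be a bin packing of the items that is M-bounded-space, using B bins. Let g : {1, …, n} → C be a coloring whose color classes are consecutive (i.e., if i ≤ j ≤ l and g(i) = g(l) then g(j) = g(i)) with exactly m distinct colors. Then there exists a bin packing f' of the same items in which every bin is monochromatic under g (all items in a bin have the same color) and the number of bins of f' is at most B + (m − 1)·M. -/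
/-- `f` is a bin packing of the items `a 0, …, a (n-1)`: it assigns each item
index to a bin (a natural number), and in each bin the item sizes sum to at
most `1`. -/
def IsPacking {n : ℕ} (a : Fin n → ℝ) (f : Fin n → ℕ) : Prop :=
  ∀ b : ℕ, ∑ i ∈ Finset.univ.filter (fun i => f i = b), a i ≤ 1

/-- The number of bins used by a packing `f`. -/
def numBins {n : ℕ} (f : Fin n → ℕ) : ℕ :=
  (Finset.univ.image f).card

/-- A packing is `M`-bounded-space if for every index `j`, the number of bins
containing both an item with index `≤ j` and an item with index `≥ j` is at
most `M`. -/
def BoundedSpacePacking {n : ℕ} (M : ℕ) (f : Fin n → ℕ) : Prop :=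
  ∀ j : Fin n,
    ((Finset.univ.image f).filter
      (fun b => (∃ i, i ≤ j ∧ f i = b) ∧ ∃ l, j ≤ l ∧ f l = b)).card ≤ M

/-!
Put item `i` into the new bin `(f i, k)`, where `k` is the first index of the colour class of `i`;
the new bins are monochromatic and refine the old ones. In each old bin the new bin of its earliest
colour class is paid for by the old bin itself. Any other new bin `(b, k)` means that bin `b` holds
an item of index `≥ k` and, as colour classes are intervals, an item of index `< k`: for a fixed
`k` at most `M` bins do so, by `M`-boundedness at `k`. The `m - 1` non-initial classes thus add at
most `(m - 1) * M` bins.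
-/

open Finset

section FirstOfColor

variable {n : ℕ} {C : Type*} [DecidableEq C] (g : Fin n → C)

def firstOfColor (i : Fin n) : Fin n :=
  ({j | g j = g i} : Finset (Fin n)).min' ⟨i, by simp⟩

lemma firstOfColor_spec (i : Fin n) : g (firstOfColor g i) = g i :=
  (mem_filter.1 (min'_mem ({j | g j = g i} : Finset (Fin n)) ⟨i, by simp⟩)).2

lemma firstOfColor_le {i j : Fin n} (h : g j = g i) : firstOfColor g i ≤ j :=
  min'_le _ _ (by simpa using h)

lemma firstOfColor_eq_iff {i j : Fin n} : firstOfColor g i = firstOfColor g j ↔ g i = g j := by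
  refine ⟨fun h => by rw [← firstOfColor_spec g i, h, firstOfColor_spec g j], fun h => ?_⟩
  exact le_antisymm (firstOfColor_le g ((firstOfColor_spec g j).trans h.symm))
    (firstOfColor_le g ((firstOfColor_spec g i).trans h))

lemma card_image_firstOfColor : #(univ.image (firstOfColor g)) = #(univ.image g) := by
  have himage : univ.image g = (univ.image (firstOfColor g)).image g := by
    rw [image_image]
    exact image_congr fun i _ => (firstOfColor_spec g i).symm
  rw [himage]
  refine (card_image_of_injOn ?_).symm
  intro x hx y hy h
  obtain ⟨i, -, rfl⟩ := mem_image.1 hx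
  obtain ⟨j, -, rfl⟩ := mem_image.1 hy
  rwa [firstOfColor_spec g i, firstOfColor_spec g j, ← firstOfColor_eq_iff] at h

lemma lt_firstOfColor_of_firstOfColor_lt
    (hconsec : ∀ i j l : Fin n, i ≤ j → j ≤ l → g i = g l → g j = g i)
    {i l : Fin n} (h : firstOfColor g i < firstOfColor g l) : i < firstOfColor g l := by
  by_contra! hle
  have hcolor := hconsec _ _ _ h.le hle (firstOfColor_spec g i)
  rw [firstOfColor_spec g l, firstOfColor_spec g i, ← firstOfColor_eq_iff] at hcolor
  exact h.ne' hcolor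

end FirstOfColor

lemma IsPacking.of_refines {n : ℕ} {a : Fin n → ℝ} {f f' : Fin n → ℕ}
    (ha : ∀ i, 0 ≤ a i) (hf : IsPacking a f) (h : ∀ i j, f' i = f' j → f i = f j) : IsPacking a f' := by
  intro b
  rcases ({i | f' i = b} : Finset (Fin n)).eq_empty_or_nonempty with hempty | ⟨i₀, hi₀⟩
  · simp [hempty]
  · refine (sum_le_sum_of_subset_of_nonneg ?_ fun i _ _ => ha i).trans (hf (f i₀))
    intro i hi
    simp only [mem_filter, mem_univ, true_and] at hi hi₀ ⊢
    exact h _ _ (hi.trans hi₀.symm)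

lemma numBins_comp {n : ℕ} {α : Type*} [DecidableEq α] {e : α → ℕ}
    (he : Function.Injective e) (h : Fin n → α) : numBins (e ∘ h) = #(univ.image h) := by
  rw [numBins, ← image_image, card_image_of_injective _ he]

namespace Finset

variable {α β : Type*} [DecidableEq α] [LinearOrder β]

lemma card_le_card_image_fst_add (P : Finset (α × β)) :
    #P ≤ #(P.image Prod.fst) + #{p ∈ P | ∃ q ∈ P, q.1 = p.1 ∧ q.2 < p.2} := by
  set Q := {p ∈ P | ∃ q ∈ P, q.1 = p.1 ∧ q.2 < p.2}
  have hleast : #(P \ Q) ≤ #(P.image Prod.fst) := by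
    refine card_le_card_of_injOn Prod.fst (fun p hp => mem_image_of_mem _ (mem_sdiff.1 hp).1) ?_
    intro p hp q hq hfst
    simp only [Q, coe_sdiff, coe_filter, Set.mem_sdiff, mem_coe, Set.mem_ofPred_eq, not_and,
      not_exists] at hp hq
    refine Prod.ext hfst (le_antisymm ?_ ?_)
    · exact not_lt.1 fun hlt => hp.2 hp.1 q hq.1 hfst.symm hlt
    · exact not_lt.1 fun hlt => hq.2 hq.1 p hp.1 hfst hlt
  exact card_le_card_sdiff_add_card.trans (Nat.add_le_add_right hleast _)

lemma card_le_card_sub_one_of_forall_exists_lt {s t : Finset β} (hts : t ⊆ s)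
    (h : ∀ k ∈ t, ∃ k' ∈ s, k' < k) : #t ≤ #s - 1 := by
  rcases s.eq_empty_or_nonempty with rfl | hs
  · simp [subset_empty.1 hts]
  rw [← card_erase_of_mem (min'_mem s hs)]
  refine card_le_card fun k hk => mem_erase.2 ⟨?_, hts hk⟩
  obtain ⟨k', hk's, hlt⟩ := h k hk
  exact (lt_of_le_of_lt (min'_le s k' hk's) hlt).ne'

end Finset

section ColorBins

variable {n M : ℕ} {C : Type*} [DecidableEq C] (f : Fin n → ℕ) (g : Fin n → C)

def colorBins : Finset (ℕ × Fin n) :=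
  univ.image fun i => (f i, firstOfColor g i)

def lateColorBins : Finset (ℕ × Fin n) :=
  {p ∈ colorBins f g | ∃ q ∈ colorBins f g, q.1 = p.1 ∧ q.2 < p.2}

lemma card_lateColorBins_snd_eq_le (hspace : BoundedSpacePacking M f)
    (hconsec : ∀ i j l : Fin n, i ≤ j → j ≤ l → g i = g l → g j = g i) (k : Fin n) :
    #{p ∈ lateColorBins f g | p.2 = k} ≤ M := by
  refine le_trans (card_le_card_of_injOn Prod.fst ?_ ?_) (hspace k)
  · intro p hp
    simp only [lateColorBins, mem_coe, mem_filter] at hp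
    simp only [colorBins, mem_image, mem_univ, true_and] at hp
    obtain ⟨⟨⟨l, hl⟩, _, ⟨i, rfl⟩, hbin, hlt⟩, rfl⟩ := hp
    subst hl
    simp only [mem_coe, mem_filter, mem_image, mem_univ, true_and]
    exact ⟨⟨l, rfl⟩, ⟨i, (lt_firstOfColor_of_firstOfColor_lt g hconsec hlt).le, hbin⟩,
      ⟨l, firstOfColor_le g rfl, rfl⟩⟩
  · intro p hp q hq hfst
    simp only [mem_coe, mem_filter] at hp hq
    exact Prod.ext hfst (hp.2.trans hq.2.symm)

lemma card_lateColorBins_le {m : ℕ} (hspace : BoundedSpacePacking M f)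
    (hconsec : ∀ i j l : Fin n, i ≤ j → j ≤ l → g i = g l → g j = g i)
    (hm : #(univ.image g) = m) : #(lateColorBins f g) ≤ (m - 1) * M := by
  rw [Nat.mul_comm]
  refine (card_le_mul_card_image _ M fun k _ =>
    card_lateColorBins_snd_eq_le f g hspace hconsec k).trans (Nat.mul_le_mul_left M ?_)
  have hsnd : ∀ p ∈ colorBins f g, p.2 ∈ univ.image (firstOfColor g) := by
    simp only [colorBins, mem_image, mem_univ, true_and]
    rintro _ ⟨l, rfl⟩
    exact ⟨l, rfl⟩
  rw [← hm, ← card_image_firstOfColor g]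
  refine card_le_card_sub_one_of_forall_exists_lt (fun k hk => ?_) fun k hk => ?_ <;>
    obtain ⟨p, hp, rfl⟩ := mem_image.1 hk <;>
    obtain ⟨hp, q, hq, -, hlt⟩ := mem_filter.1 hp
  · exact hsnd p hp
  · exact ⟨q.2, hsnd q hq, hlt⟩

lemma card_colorBins_le : #(colorBins f g) ≤ numBins f + #(lateColorBins f g) := by
  have hfst : (colorBins f g).image Prod.fst = univ.image f := by
    rw [colorBins, image_image]
    rfl
  rw [numBins, ← hfst]
  exact card_le_card_image_fst_add _

end ColorBins

theorem monochromatic_repacking_general {n m : ℕ} {C : Type*} [DecidableEq C]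
    (a : Fin n → ℝ) (ha : ∀ i, a i ∈ Set.Icc (0 : ℝ) 1)
    (M : ℕ) (f : Fin n → ℕ)
    (hf : IsPacking a f) (hspace : BoundedSpacePacking M f)
    (g : Fin n → C)
    (hconsec : ∀ i j l : Fin n, i ≤ j → j ≤ l → g i = g l → g j = g i)
    (hm : (Finset.univ.image g).card = m) :
    ∃ f' : Fin n → ℕ, IsPacking a f' ∧
      (∀ i j : Fin n, f' i = f' j → g i = g j) ∧
      numBins f' ≤ numBins f + (m - 1) * M := by
  refine ⟨fun i => Nat.pair (f i) (firstOfColor g i),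
    hf.of_refines (fun i => (ha i).1) fun i j h => (Nat.pair_eq_pair.1 h).1,
    fun i j h => (firstOfColor_eq_iff g).1 (Fin.ext (Nat.pair_eq_pair.1 h).2), ?_⟩
  have hencode : Function.Injective fun p : ℕ × Fin n => Nat.pair p.1 p.2 :=
    fun p q h => Prod.ext (Nat.pair_eq_pair.1 h).1 (Fin.ext (Nat.pair_eq_pair.1 h).2)
  calc numBins _ = #(colorBins f g) := numBins_comp hencode _
    _ ≤ numBins f + #(lateColorBins f g) := card_colorBins_le f g
    _ ≤ numBins f + (m - 1) * M :=
      Nat.add_le_add_left (card_lateColorBins_le f g hspace hconsec hm) _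

/-- Let `a 0, …, a (n-1) ∈ [0,1]` be item sizes, `M ≥ 1` an integer, and `f`
an `M`-bounded-space bin packing of the items using `B` bins.  Let `g` be a
coloring of the items whose color classes are consecutive and which uses
exactly `m` distinct colors.  Then there is a bin packing `f'` of the same
items in which every bin is monochromatic under `g` and whose number of bins
is at most `B + (m - 1)·M`. -/
theorem monochromatic_repacking {n m : ℕ} {C : Type*} [DecidableEq C]
    (a : Fin n → ℝ) (ha : ∀ i, a i ∈ Set.Icc (0 : ℝ) 1)
    (M : ℕ) (hM : 1 ≤ M) (f : Fin n → ℕ)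
    (hf : IsPacking a f) (hspace : BoundedSpacePacking M f)
    (g : Fin n → C)
    (hconsec : ∀ i j l : Fin n, i ≤ j → j ≤ l → g i = g l → g j = g i)
    (hm : (Finset.univ.image g).card = m) :
    ∃ f' : Fin n → ℕ, IsPacking a f' ∧
      (∀ i j : Fin n, f' i = f' j → g i = g j) ∧
      numBins f' ≤ numBins f + (m - 1) * M :=
  monochromatic_repacking_general a ha M f hf hspace g hconsec hm
end

section
/- Let M ≥ 2 be an integer and let k ≥ 1 be the index with u_k < M ≤ u_{k+1}. For every finite sequence of item sizes a_1, …, a_n ∈ [0,1], there exists a bin packing of the items that is M-bounded-space and uses at most (Σ_{i=1}^{k} 1/u_i + M/((M − 1)·u_{k+1})) · opt_BP + (M − 1) bins, where opt_BP is the minimum number of bins over all bin packings of a_1, …, a_n (with no space constraint). -/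
/-- The minimum number of bins over all bin packings of `a` (no space
constraint). -/
noncomputable def optBP {n : ℕ} (a : Fin n → ℝ) : ℕ :=
  sInf {B : ℕ | ∃ f : Fin n → ℕ, IsPacking a f ∧ numBins f = B}

namespace BinPacking

open Finset

noncomputable def sizeClass (M : ℕ) (x : ℝ) : ℕ := if x ≤ 1 / M then M else ⌊1 / x⌋₊

noncomputable def itemWeight (M : ℕ) (x : ℝ) : ℝ :=
  if sizeClass M x = M then M / (M - 1) * x else 1 / sizeClass M x

section SizeClass

variable {M : ℕ} {x : ℝ}

lemma sizeClass_lt (hM : 0 < M) (h : 1 / (M : ℝ) < x) : sizeClass M x < M := by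
  have hx : 0 < x := lt_trans (by positivity) h
  rw [sizeClass, if_neg h.not_ge, Nat.floor_lt (by positivity)]
  exact (one_div_lt hx (by positivity)).2 h

lemma sizeClass_eq_self_iff (hM : 0 < M) : sizeClass M x = M ↔ x ≤ 1 / M :=
  ⟨fun h => not_lt.1 fun h' => (sizeClass_lt hM h').ne h, fun h => if_pos h⟩

lemma sizeClass_le (hM : 0 < M) (x : ℝ) : sizeClass M x ≤ M := by
  by_cases h : x ≤ 1 / M
  · exact (if_pos h).le
  · exact (sizeClass_lt hM (not_le.1 h)).le

lemma one_le_sizeClass (hM : 0 < M) (hx : x ≤ 1) : 1 ≤ sizeClass M x := by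
  unfold sizeClass
  split_ifs with h
  · exact hM
  · have hx0 : 0 < x := lt_trans (by positivity) (not_le.1 h)
    exact Nat.le_floor (by simpa using one_le_one_div hx0 hx)

lemma one_div_sizeClass_add_one_lt (hM : 0 < M) (h : sizeClass M x ≠ M) :
    1 / ((sizeClass M x : ℝ) + 1) < x := by
  have h' : ¬x ≤ 1 / M := (sizeClass_eq_self_iff hM).not.1 h
  have hx : 0 < x := lt_trans (by positivity) (not_le.1 h')
  rw [sizeClass, if_neg h']
  exact (one_div_lt hx (by positivity)).1 (Nat.lt_floor_add_one _)

lemma le_one_div_sizeClass (hM : 0 < M) (hx1 : x ≤ 1) (h : sizeClass M x ≠ M) :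
    x ≤ 1 / (sizeClass M x : ℝ) := by
  have h' : ¬x ≤ 1 / M := (sizeClass_eq_self_iff hM).not.1 h
  have hx : 0 < x := lt_trans (by positivity) (not_le.1 h')
  have hc : (0 : ℝ) < sizeClass M x := by exact_mod_cast one_le_sizeClass hM hx1
  refine (le_one_div hx hc).2 ?_
  rw [sizeClass, if_neg h']
  exact Nat.floor_le (by positivity)

end SizeClass

section Order

variable {α : Type*} [LinearOrder α] (T : Finset α)

def rank (i : α) : ℕ := #{j ∈ T | j < i}

lemma rank_mono : Monotone (rank T) := fun _ _ hil =>
  card_le_card <| monotone_filter_right T fun _ _ hj => lt_of_lt_of_le hj hil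

lemma rank_strictMonoOn : StrictMonoOn (rank T) T := fun i hi _ _ hil =>
  card_lt_card <|
    (ssubset_iff_of_subset <| monotone_filter_right T fun _ _ hj => hj.trans hil).2
    ⟨i, mem_filter.2 ⟨hi, hil⟩, fun h => lt_irrefl i (mem_filter.1 h).2⟩

lemma rank_lt_card {i : α} (hi : i ∈ T) : rank T i < #T :=
  card_lt_card <| filter_ssubset.2 ⟨i, hi, lt_irrefl i⟩

lemma card_filter_rank_div_eq_le {c : ℕ} (hc : 0 < c) (m : ℕ) :
    #{i ∈ T | rank T i / c = m} ≤ c := by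
  refine (card_le_card_of_injOn (fun i => rank T i % c) (fun i _ => ?_) ?_).trans
    (card_range c).le
  · exact mem_coe.2 (mem_range.2 (Nat.mod_lt _ hc))
  · intro i hi l hl (h : rank T i % c = rank T l % c)
    have hi' := mem_filter.1 hi
    have hl' := mem_filter.1 hl
    refine (rank_strictMonoOn T).injOn hi'.1 hl'.1 ?_
    rw [← Nat.div_add_mod (rank T i) c, ← Nat.div_add_mod (rank T l) c, hi'.2, hl'.2, h]

lemma card_image_rank_div_le {c : ℕ} (hc : 0 < c) :
    (#(T.image fun i => rank T i / c) : ℝ) ≤ #T / c + (1 - 1 / c) := by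
  have hsub : T.image (fun i => rank T i / c) ⊆ range ((#T + c - 1) / c) := by
    intro m hm
    obtain ⟨i, hi, rfl⟩ := mem_image.1 hm
    have := rank_lt_card T hi
    rw [mem_range, Nat.lt_iff_add_one_le, ← Nat.add_div_right _ hc]
    exact Nat.div_le_div_right (by omega)
  calc (#(T.image fun i => rank T i / c) : ℝ) ≤ ((#T + c - 1) / c : ℕ) := by
        exact_mod_cast (card_le_card hsub).trans (card_range _).le
    _ ≤ ((#T + c - 1 : ℕ) : ℝ) / c := Nat.cast_div_le
    _ = #T / c + (1 - 1 / c) := by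
        have hc' : (c : ℝ) ≠ 0 := by positivity
        rw [Nat.cast_sub (by omega)]
        push_cast
        field_simp
        ring

variable (x : α → ℝ)

def prefixSum (i : α) : ℝ := ∑ j ∈ T with j < i, x j

variable {T x}

lemma prefixSum_mono (hx : ∀ j ∈ T, 0 ≤ x j) : Monotone (prefixSum T x) := fun _ _ hil =>
  sum_le_sum_of_subset_of_nonneg (monotone_filter_right T fun _ _ hj => lt_of_lt_of_le hj hil)
    fun j hj _ => hx j (mem_filter.1 hj).1

lemma prefixSum_le_sum (hx : ∀ j ∈ T, 0 ≤ x j) (i : α) : prefixSum T x i ≤ ∑ j ∈ T, x j :=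
  sum_le_sum_of_subset_of_nonneg (filter_subset _ _) fun j hj _ => hx j hj

lemma sum_filter_floor_prefixSum_eq_le {r ε : ℝ} (hr : 0 < r) (hε : 0 ≤ ε)
    (hx : ∀ j ∈ T, 0 ≤ x j ∧ x j ≤ ε) (m : ℕ) :
    ∑ i ∈ T with ⌊r * prefixSum T x i⌋₊ = m, x i ≤ 1 / r + ε := by
  set F := T.filter fun i => ⌊r * prefixSum T x i⌋₊ = m
  rcases F.eq_empty_or_nonempty with hF | hF
  · rw [hF, sum_empty]
    positivity
  have hpre : ∀ i, 0 ≤ r * prefixSum T x i := fun i =>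
    mul_nonneg hr.le (sum_nonneg fun j hj => (hx j (mem_filter.1 hj).1).1)
  set imin := F.min' hF
  set imax := F.max' hF
  have hmin := (Nat.floor_eq_iff (hpre imin)).1 (mem_filter.1 (F.min'_mem hF)).2
  have hmax := (Nat.floor_eq_iff (hpre imax)).1 (mem_filter.1 (F.max'_mem hF)).2
  -- the items of the bin other than the last one lie between `imin` and `imax`
  have hspan : ∑ i ∈ F.erase imax, x i + prefixSum T x imin ≤ prefixSum T x imax := by
    rw [prefixSum, prefixSum, ← sum_union]
    · refine sum_le_sum_of_subset_of_nonneg (fun i hi => ?_)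
        fun j hj _ => (hx j (mem_filter.1 hj).1).1
      rw [mem_filter]
      rcases mem_union.1 hi with hi | hi
      · exact ⟨(mem_filter.1 (mem_of_mem_erase hi)).1,
          lt_of_le_of_ne (F.le_max' i (mem_of_mem_erase hi)) (ne_of_mem_erase hi)⟩
      · exact ⟨(mem_filter.1 hi).1,
          lt_of_lt_of_le (mem_filter.1 hi).2 (F.min'_le _ (F.max'_mem hF))⟩
    · exact disjoint_left.2 fun i hi hi' =>
        (mem_filter.1 hi').2.not_ge (F.min'_le i (mem_of_mem_erase hi))
  have hdiff : prefixSum T x imax - prefixSum T x imin < 1 / r := by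
    rw [lt_div_iff₀ hr]
    linarith
  rw [← add_sum_erase F x (F.max'_mem hF)]
  linarith [(hx imax (mem_filter.1 (F.max'_mem hF)).1).2]

lemma card_image_floor_prefixSum_le {r : ℝ} (hr : 0 ≤ r) (hx : ∀ j ∈ T, 0 ≤ x j) :
    (#(T.image fun i => ⌊r * prefixSum T x i⌋₊) : ℝ) ≤ r * ∑ j ∈ T, x j + 1 := by
  have hsub :
      T.image (fun i => ⌊r * prefixSum T x i⌋₊) ⊆ range (⌊r * ∑ j ∈ T, x j⌋₊ + 1) := by
    intro m hm
    obtain ⟨i, -, rfl⟩ := mem_image.1 hm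
    exact mem_range.2 (Nat.lt_succ_of_le
      (Nat.floor_le_floor (mul_le_mul_of_nonneg_left (prefixSum_le_sum hx i) hr)))
  calc (#(T.image fun i => ⌊r * prefixSum T x i⌋₊) : ℝ)
      ≤ (⌊r * ∑ j ∈ T, x j⌋₊ + 1 : ℕ) := by
        exact_mod_cast (card_le_card hsub).trans (card_range _).le
    _ ≤ r * ∑ j ∈ T, x j + 1 := by
        push_cast
        linarith [Nat.floor_le (mul_nonneg hr (sum_nonneg hx))]

end Order

section Classwise

variable {n : ℕ} (κ : Fin n → ℕ) (β : ℕ → Fin n → ℕ)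

/-- Bin `Nat.pair c m` is the `m`-th bin reserved for class `c`. -/
def classwisePacking (i : Fin n) : ℕ := Nat.pair (κ i) (β (κ i) i)

lemma classwisePacking_eq_pair_iff {i : Fin n} {c m : ℕ} :
    classwisePacking κ β i = Nat.pair c m ↔ κ i = c ∧ β c i = m := by
  rw [classwisePacking, Nat.pair_eq_pair]
  constructor <;> rintro ⟨rfl, h⟩ <;> exact ⟨rfl, h⟩

lemma isPacking_classwisePacking (a : Fin n → ℝ)
    (h : ∀ c m, ∑ i with κ i = c ∧ β c i = m, a i ≤ 1) :
    IsPacking a (classwisePacking κ β) := by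
  intro b
  obtain ⟨c, m, rfl⟩ : ∃ c m, b = Nat.pair c m := ⟨_, _, (Nat.pair_unpair b).symm⟩
  simpa only [classwisePacking_eq_pair_iff] using h c m

lemma boundedSpacePacking_classwisePacking {M : ℕ} (s : Finset ℕ) (hs : #s ≤ M)
    (hκ : ∀ i, κ i ∈ s) (hβ : ∀ c i l, i ≤ l → κ i = c → κ l = c → β c i ≤ β c l) :
    BoundedSpacePacking M (classwisePacking κ β) := by
  intro j
  refine (card_le_card_of_injOn (fun b => b.unpair.1) (fun b hb => ?_) ?_).trans hs
  · obtain ⟨i, -, rfl⟩ := mem_image.1 (mem_filter.1 hb).1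
    simpa [classwisePacking] using hκ i
  · intro b₁ hb₁ b₂ hb₂ hc
    obtain ⟨-, ⟨i₁, hij₁, rfl⟩, l₁, hjl₁, hl₁⟩ := mem_filter.1 hb₁
    obtain ⟨-, ⟨i₂, hij₂, rfl⟩, l₂, hjl₂, hl₂⟩ := mem_filter.1 hb₂
    simp only [classwisePacking, Nat.unpair_pair] at hc
    rw [show classwisePacking κ β i₁ = Nat.pair (κ i₁) (β (κ i₁) i₁) from rfl,
      classwisePacking_eq_pair_iff] at hl₁
    rw [show classwisePacking κ β i₂ = Nat.pair (κ i₂) (β (κ i₂) i₂) from rfl,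
      classwisePacking_eq_pair_iff] at hl₂
    rw [← hc] at hl₂
    -- both bins are open at `j`, so each was opened before the other was closed
    have h₁₂ : β (κ i₁) i₁ ≤ β (κ i₁) i₂ :=
      (hβ _ _ _ (hij₁.trans hjl₂) rfl hl₂.1).trans_eq hl₂.2
    have h₂₁ : β (κ i₁) i₂ ≤ β (κ i₁) i₁ :=
      (hβ _ _ _ (hij₂.trans hjl₁) hc.symm hl₁.1).trans_eq hl₁.2
    rw [classwisePacking, classwisePacking, ← hc, le_antisymm h₁₂ h₂₁]

lemma numBins_classwisePacking_le (s : Finset ℕ) (hκ : ∀ i, κ i ∈ s) :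
    numBins (classwisePacking κ β) ≤ ∑ c ∈ s, #((univ.filter fun i => κ i = c).image (β c)) :=
  calc numBins (classwisePacking κ β)
      ≤ #(s.biUnion fun c => ((univ.filter fun i => κ i = c).image (β c)).image (Nat.pair c)) :=
        card_le_card fun b hb => by
          obtain ⟨i, -, rfl⟩ := mem_image.1 hb
          exact mem_biUnion.2 ⟨κ i, hκ i, mem_image_of_mem _ (mem_image_of_mem _ (by simp))⟩
    _ ≤ ∑ c ∈ s, #(((univ.filter fun i => κ i = c).image (β c)).image (Nat.pair c)) :=
        card_biUnion_le
    _ ≤ ∑ c ∈ s, #((univ.filter fun i => κ i = c).image (β c)) :=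
        sum_le_sum fun _ _ => card_image_le

end Classwise

section Harmonic

variable {n M : ℕ} {a : Fin n → ℝ}

noncomputable def classItems (M : ℕ) (a : Fin n → ℝ) (c : ℕ) : Finset (Fin n) :=
  univ.filter fun i => sizeClass M (a i) = c

/-- Items of class `c < M` go `c` to a bin in order of arrival. A small item goes to the bin
numbered by how many multiples of `(M - 1) / M` the earlier small items fill, so a bin of small
items holds less than `(M - 1) / M` besides its last item. -/
noncomputable def binIndex (M : ℕ) (a : Fin n → ℝ) (c : ℕ) (i : Fin n) : ℕ :=
  if c = M then ⌊M / (M - 1) * prefixSum (classItems M a M) a i⌋₊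
  else rank (classItems M a c) i / c

noncomputable def harmonicPacking (M : ℕ) (a : Fin n → ℝ) : Fin n → ℕ :=
  classwisePacking (fun i => sizeClass M (a i)) (binIndex M a)

/-- Bound on the number of bins of class `c` beyond the total weight of its items. -/
noncomputable def classOverhead (M c : ℕ) : ℝ := if c = M then 1 else 1 - 1 / c

lemma sum_classOverhead_le (hM : 2 ≤ M) : ∑ c ∈ Icc 1 M, classOverhead M c ≤ M - 1 := by
  simp only [classOverhead]
  rw [← Ico_add_one_right_eq_Icc, sum_Ico_succ_top (by omega), if_pos rfl,
    sum_congr rfl fun c hc => if_neg (mem_Ico.1 hc).2.ne, sum_sub_distrib, sum_const,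
    Nat.card_Ico, nsmul_eq_mul, mul_one, Nat.cast_sub (by omega)]
  have := single_le_sum (f := fun c : ℕ => (1 : ℝ) / c) (fun _ _ => by positivity)
    (mem_Ico.2 ⟨le_rfl, hM⟩ : 1 ∈ Ico 1 M)
  norm_num at this ⊢
  linarith

variable (hM : 2 ≤ M) (ha : ∀ i, a i ∈ Set.Icc (0 : ℝ) 1)
include hM ha

lemma sizeClass_mem_Icc (i : Fin n) : sizeClass M (a i) ∈ Icc 1 M :=
  mem_Icc.2 ⟨one_le_sizeClass (by omega) (ha i).2, sizeClass_le (by omega) _⟩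

lemma harmonicPacking_isPacking : IsPacking a (harmonicPacking M a) := by
  refine isPacking_classwisePacking _ _ a fun c m => ?_
  rw [← filter_filter]
  change ∑ i ∈ (classItems M a c).filter (fun i => binIndex M a c i = m), a i ≤ 1
  have hM' : (1 : ℝ) < M := by exact_mod_cast hM
  by_cases hcM : c = M
  · simp only [binIndex, hcM, ↓reduceIte]
    refine (sum_filter_floor_prefixSum_eq_le (div_pos (by positivity) (by linarith))
      (by positivity) (fun j hj => ⟨(ha j).1, (sizeClass_eq_self_iff (by omega)).1
        (mem_filter.1 hj).2⟩) m).trans_eq ?_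
    have : (M : ℝ) - 1 ≠ 0 := by linarith
    field_simp
    ring
  simp only [binIndex, if_neg hcM]
  rcases Nat.eq_zero_or_pos c with rfl | hc
  · refine (sum_eq_zero fun i hi => absurd (mem_filter.1 (mem_filter.1 hi).1).2
      (Nat.one_le_iff_ne_zero.1 (mem_Icc.1 (sizeClass_mem_Icc hM ha i)).1)).trans_le
      zero_le_one
  set F := (classItems M a c).filter fun i => rank (classItems M a c) i / c = m
  calc _ ≤ ∑ i ∈ F, (1 : ℝ) / c :=
        sum_le_sum fun i hi => by
          have hci := (mem_filter.1 (mem_filter.1 hi).1).2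
          simpa only [hci] using le_one_div_sizeClass (by omega) (ha i).2 (hci.trans_ne hcM)
    _ = #F * (1 / c) := by rw [sum_const, nsmul_eq_mul]
    _ ≤ c * (1 / c) := by
        gcongr
        exact_mod_cast card_filter_rank_div_eq_le _ hc m
    _ = 1 := mul_one_div_cancel (by positivity)

lemma harmonicPacking_boundedSpace : BoundedSpacePacking M (harmonicPacking M a) := by
  have hM' : (1 : ℝ) < M := by exact_mod_cast hM
  refine boundedSpacePacking_classwisePacking _ _ (Icc 1 M) (by simp)
    (sizeClass_mem_Icc hM ha) ?_
  rintro c i l hil - -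
  unfold binIndex
  split_ifs
  · exact Nat.floor_le_floor (mul_le_mul_of_nonneg_left
      (prefixSum_mono (fun j _ => (ha j).1) hil) (div_nonneg (by linarith) (by linarith)))
  · exact Nat.div_le_div_right (rank_mono _ hil)

lemma card_image_binIndex_le {c : ℕ} (hc : c ∈ Icc 1 M) :
    (#((classItems M a c).image (binIndex M a c)) : ℝ) ≤
      ∑ i ∈ classItems M a c, itemWeight M (a i) + classOverhead M c := by
  by_cases hcM : c = M
  · have hM' : (1 : ℝ) < M := by exact_mod_cast hM
    have hw : ∑ i ∈ classItems M a M, itemWeight M (a i) =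
        M / (M - 1) * ∑ i ∈ classItems M a M, a i := by
      rw [mul_sum]
      exact sum_congr rfl fun i hi => if_pos (mem_filter.1 hi).2
    have hβ : binIndex M a M = fun i => ⌊M / (M - 1) * prefixSum (classItems M a M) a i⌋₊ :=
      funext fun i => if_pos rfl
    simp only [classOverhead, hcM, ↓reduceIte, hw, hβ]
    refine card_image_floor_prefixSum_le ?_ fun j _ => (ha j).1
    exact div_nonneg (by linarith) (by linarith)
  · have hw : ∑ i ∈ classItems M a c, itemWeight M (a i) = #(classItems M a c) / c := by
      rw [div_eq_mul_one_div, ← nsmul_eq_mul, ← sum_const]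
      exact sum_congr rfl fun i hi => by rw [itemWeight, (mem_filter.1 hi).2, if_neg hcM]
    have hβ : binIndex M a c = fun i => rank (classItems M a c) i / c :=
      funext fun i => if_neg hcM
    rw [hw, hβ, classOverhead, if_neg hcM]
    exact card_image_rank_div_le _ (mem_Icc.1 hc).1

lemma numBins_harmonicPacking_le :
    (numBins (harmonicPacking M a) : ℝ) ≤ ∑ i, itemWeight M (a i) + (M - 1) :=
  calc (numBins (harmonicPacking M a) : ℝ)
      ≤ ∑ c ∈ Icc 1 M, (#((classItems M a c).image (binIndex M a c)) : ℝ) := by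
        exact_mod_cast numBins_classwisePacking_le _ _ _ (sizeClass_mem_Icc hM ha)
    _ ≤ ∑ c ∈ Icc 1 M, (∑ i ∈ classItems M a c, itemWeight M (a i) + classOverhead M c) :=
        sum_le_sum fun c hc => card_image_binIndex_le hM ha hc
    _ ≤ ∑ i, itemWeight M (a i) + (M - 1) := by
        unfold classItems
        rw [sum_add_distrib, sum_fiberwise_of_maps_to fun i _ => sizeClass_mem_Icc hM ha i]
        linarith [sum_classOverhead_le hM]

end Harmonic

section Excess

variable {M : ℕ}

/-- The weight `1 / c` of an item of class `c < M`, less `M / (M - 1)` times the lower bound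
`1 / (c + 1)` on its size. -/
noncomputable def excess (M c : ℕ) : ℝ := 1 / c - M / (M - 1) * (1 / (c + 1))

lemma itemWeight_of_ne {x : ℝ} (h : sizeClass M x ≠ M) :
    itemWeight M x = excess M (sizeClass M x) + M / (M - 1) * (1 / (sizeClass M x + 1)) := by
  rw [itemWeight, if_neg h, excess]
  ring

lemma excess_eq (hM : 2 ≤ M) {c : ℕ} (hc : 1 ≤ c) :
    excess M c = (1 / c - 1 / (M - 1)) / (c + 1) := by
  have hM' : (M : ℝ) - 1 ≠ 0 := by
    have : (2 : ℝ) ≤ M := by exact_mod_cast hM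
    linarith
  have hc' : (c : ℝ) ≠ 0 := by positivity
  unfold excess
  field_simp
  ring

lemma excess_le (hM : 2 ≤ M) {c t : ℕ} (ht : 1 ≤ t) (htc : t ≤ c) :
    excess M c ≤ (1 / t - 1 / (M - 1)) / (c + 1) := by
  rw [excess_eq hM (ht.trans htc)]
  gcongr

lemma excess_nonneg (hM : 2 ≤ M) {c : ℕ} (hc : 1 ≤ c) (hcM : c < M) : 0 ≤ excess M c := by
  rw [excess_eq hM hc]
  have : (c : ℝ) ≤ M - 1 := by
    rw [le_sub_iff_add_le]
    exact_mod_cast hcM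
  have : (0 : ℝ) < c := by exact_mod_cast hc
  exact div_nonneg (sub_nonneg.2 (one_div_le_one_div_of_le (by positivity) (by linarith)))
    (by positivity)

lemma excess_nonpos (hM : 2 ≤ M) {c : ℕ} (hMc : M ≤ c + 1) : excess M c ≤ 0 := by
  rw [excess_eq hM (by omega)]
  have hMc' : (M : ℝ) - 1 ≤ c := by
    rw [sub_le_iff_le_add]
    exact_mod_cast hMc
  have : (1 : ℝ) < M := by exact_mod_cast hM
  exact div_nonpos_of_nonpos_of_nonneg
    (sub_nonpos.2 (one_div_le_one_div_of_le (by linarith) hMc')) (by positivity)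

lemma lt_add_one_of_sum_one_div_lt {ι : Type*} {B : Finset ι} {c : ι → ℕ} {t : ℕ}
    (hB : ∑ i ∈ B, (1 : ℝ) / (c i + 1) < 1 / t) {i : ι} (hi : i ∈ B) : t < c i + 1 := by
  have h := (single_le_sum (fun j _ => by positivity) hi).trans_lt hB
  exact_mod_cast lt_of_one_div_lt_one_div (by positivity) h

lemma sum_excess_le_excess (hM : 2 ≤ M) {ι : Type*} {B : Finset ι} {c : ι → ℕ} {t : ℕ}
    (ht : 1 ≤ t) (htM : t < M) (hc : ∀ i ∈ B, t + 1 ≤ c i)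
    (hB : ∑ i ∈ B, (1 : ℝ) / (c i + 1) < 1 / t) :
    ∑ i ∈ B, excess M (c i) ≤ excess M t := by
  -- `(c + 1) * excess M c = 1 / c - 1 / (M - 1)` is largest at the smallest class `t + 1`
  set D : ℝ := 1 / (t + 1) - 1 / (M - 1)
  have hD : ∑ i ∈ B, excess M (c i) ≤ D * ∑ i ∈ B, (1 : ℝ) / (c i + 1) := by
    rw [mul_sum]
    refine sum_le_sum fun i hi => ?_
    have := excess_le hM (Nat.le_add_left 1 t) (hc i hi)
    push_cast at this
    rwa [div_eq_mul_one_div] at this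
  rcases le_total D 0 with hD0 | hD0
  · have := mul_nonpos_of_nonpos_of_nonneg hD0 (sum_nonneg fun i _ => by positivity :
      0 ≤ ∑ i ∈ B, (1 : ℝ) / (c i + 1))
    linarith [excess_nonneg hM ht htM]
  have ht' : (0 : ℝ) < t := by exact_mod_cast ht
  have hM' : (0 : ℝ) < M - 1 := by
    have : (2 : ℝ) ≤ M := by exact_mod_cast hM
    linarith
  have hDt : D * (1 / t) ≤ excess M t := by
    rw [excess_eq hM ht]
    calc D * (1 / t) = 1 / t / (t + 1) - 1 / (M - 1) * (1 / t) := by ring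
      _ ≤ 1 / t / (t + 1) - 1 / (M - 1) * (1 / (t + 1)) := by gcongr; linarith
      _ = (1 / t - 1 / (M - 1)) / (t + 1) := by ring
  linarith [mul_le_mul_of_nonneg_left hB.le hD0]

end Excess

section Sylvester

variable {u : ℕ → ℕ}

lemma sylvester_mono (hu : ∀ k, 1 ≤ k → u (k + 1) = u k * (u k + 1)) {i j : ℕ} (hi : 1 ≤ i)
    (hij : i ≤ j) : u i ≤ u j := by
  induction j, hij using Nat.le_induction with
  | base => rfl
  | succ j hij ih =>
    rw [hu j (hi.trans hij)]
    exact ih.trans (Nat.le_mul_of_pos_right _ (Nat.succ_pos _))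

variable (hu1 : u 1 = 1) (hu : ∀ k, 1 ≤ k → u (k + 1) = u k * (u k + 1))
include hu1 hu

lemma one_le_sylvester {j : ℕ} (hj : 1 ≤ j) : 1 ≤ u j :=
  hu1 ▸ sylvester_mono hu le_rfl hj

lemma one_div_sylvester_sub_one_div_add_one {j : ℕ} (hj : 1 ≤ j) :
    (1 : ℝ) / u j - 1 / (u j + 1) = 1 / u (j + 1) := by
  have : (u j : ℝ) ≠ 0 := by exact_mod_cast Nat.one_le_iff_ne_zero.1 (one_le_sylvester hu1 hu hj)
  rw [hu j hj]
  push_cast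
  field_simp
  ring

lemma sum_one_div_sylvester_add_one (k : ℕ) :
    ∑ j ∈ Icc 1 k, (1 : ℝ) / (u j + 1) = 1 - 1 / u (k + 1) := by
  induction k with
  | zero => simp [hu1]
  | succ k ih =>
    rw [sum_Icc_succ_top (by omega), ih,
      ← one_div_sylvester_sub_one_div_add_one hu1 hu (by omega : 1 ≤ k + 1)]
    ring

end Sylvester

section Extremal

variable {u : ℕ → ℕ} (hu1 : u 1 = 1) (hu : ∀ k, 1 ≤ k → u (k + 1) = u k * (u k + 1))
  {M k : ℕ} (hM : 2 ≤ M) (hukM : u k < M) (hMuk : M ≤ u (k + 1))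
include hu1 hu hM hukM in
lemma sum_excess_sylvester_nonneg {s : ℕ} (hs : 1 ≤ s) : 0 ≤ ∑ j ∈ Icc s k, excess M (u j) :=
  sum_nonneg fun _ hj => excess_nonneg hM (one_le_sylvester hu1 hu (hs.trans (mem_Icc.1 hj).1))
    ((sylvester_mono hu (hs.trans (mem_Icc.1 hj).1) (mem_Icc.1 hj).2).trans_lt hukM)

include hu1 hu hM hukM hMuk in
theorem sum_excess_le_sum_excess_sylvester {ι : Type*} (c : ι → ℕ) {s : ℕ} (hs : 1 ≤ s)
    (hsk : s ≤ k + 1) (B : Finset ι) (hB : ∑ i ∈ B, (1 : ℝ) / (c i + 1) < 1 / u s) :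
    ∑ i ∈ B, excess M (c i) ≤ ∑ j ∈ Icc s k, excess M (u j) := by
  classical
  induction hsk using Nat.decreasingInduction generalizing B with
  | self =>
    rw [Icc_eq_empty (by omega), sum_empty]
    exact sum_nonpos fun i hi =>
      excess_nonpos hM (hMuk.trans (lt_add_one_of_sum_one_div_lt hB hi).le)
  | of_succ s hsk ih =>
    have hus : 1 ≤ u s := one_le_sylvester hu1 hu hs
    have hrest := sum_excess_sylvester_nonneg hu1 hu hM hukM (by omega : 1 ≤ s + 1)
    rw [← insert_Icc_add_one_left_eq_Icc (by omega : s ≤ k), sum_insert (by simp)]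
    by_cases hmem : ∃ i₀ ∈ B, c i₀ = u s
    · obtain ⟨i₀, hi₀, hci₀⟩ := hmem
      rw [← add_sum_erase B _ hi₀, hci₀] at hB
      rw [← add_sum_erase B _ hi₀, hci₀]
      have hB' : ∑ i ∈ B.erase i₀, (1 : ℝ) / (c i + 1) < 1 / u (s + 1) := by
        rw [← one_div_sylvester_sub_one_div_add_one hu1 hu hs]
        linarith
      linarith [ih (by omega) (B.erase i₀) hB']
    push Not at hmem
    have hgt : ∀ i ∈ B, u s + 1 ≤ c i := fun i hi =>
      lt_of_le_of_ne (Nat.lt_add_one_iff.1 (lt_add_one_of_sum_one_div_lt hB hi)) (hmem i hi).symm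
    linarith [sum_excess_le_excess hM hus ((sylvester_mono hu hs (by omega)).trans_lt hukM) hgt hB]

include hu1 hu in
lemma sum_excess_sylvester_add :
    ∑ j ∈ Icc 1 k, excess M (u j) + M / (M - 1) =
      ∑ j ∈ Icc 1 k, (1 : ℝ) / u j + M / ((M - 1) * u (k + 1)) := by
  simp only [excess]
  rw [sum_sub_distrib, ← mul_sum, sum_one_div_sylvester_add_one hu1 hu,
    ← one_mul (M : ℝ), ← div_mul_div_comm, one_mul]
  ring

include hu1 hu hM hukM hMuk in
theorem sum_itemWeight_le {ι : Type*} (I : Finset ι) (x : ι → ℝ)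
    (hx : ∀ i ∈ I, x i ∈ Set.Icc (0 : ℝ) 1) (hI : ∑ i ∈ I, x i ≤ 1) :
    ∑ i ∈ I, itemWeight M (x i) ≤ ∑ j ∈ Icc 1 k, (1 : ℝ) / u j + M / ((M - 1) * u (k + 1)) := by
  classical
  have hr : (0 : ℝ) ≤ M / (M - 1) := by
    have : (2 : ℝ) ≤ M := by exact_mod_cast hM
    exact div_nonneg (by linarith) (by linarith)
  set S := I.filter fun i => sizeClass M (x i) = M
  set B := I.filter fun i => ¬sizeClass M (x i) = M
  have hlt : ∀ i ∈ B, (1 : ℝ) / (sizeClass M (x i) + 1) < x i := fun i hi =>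
    one_div_sizeClass_add_one_lt (by omega) (mem_filter.1 hi).2
  have hsplit : ∑ i ∈ S, x i + ∑ i ∈ B, x i ≤ 1 :=
    (sum_filter_add_sum_filter_not I _ x).trans_le hI
  have hS : 0 ≤ ∑ i ∈ S, x i := sum_nonneg fun i hi => (hx i (mem_filter.1 hi).1).1
  have hmass : ∑ i ∈ B, (1 : ℝ) / (sizeClass M (x i) + 1) + ∑ i ∈ S, x i ≤ 1 := by
    linarith [sum_le_sum fun i hi => (hlt i hi).le]
  have hB : ∑ i ∈ B, (1 : ℝ) / (sizeClass M (x i) + 1) < 1 / u 1 := by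
    rw [hu1, Nat.cast_one, div_one]
    rcases B.eq_empty_or_nonempty with hBe | hBne
    · simp [hBe]
    · linarith [sum_lt_sum_of_nonempty hBne hlt]
  have hwS : ∑ i ∈ S, itemWeight M (x i) = M / (M - 1) * ∑ i ∈ S, x i := by
    rw [mul_sum]
    exact sum_congr rfl fun i hi => if_pos (mem_filter.1 hi).2
  have hwB : ∑ i ∈ B, itemWeight M (x i) = ∑ i ∈ B, excess M (sizeClass M (x i)) +
      M / (M - 1) * ∑ i ∈ B, (1 : ℝ) / (sizeClass M (x i) + 1) := by
    rw [mul_sum, ← sum_add_distrib]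
    exact sum_congr rfl fun i hi => itemWeight_of_ne (mem_filter.1 hi).2
  rw [← sum_filter_add_sum_filter_not I (fun i => sizeClass M (x i) = M), hwS, hwB,
    ← sum_excess_sylvester_add hu1 hu]
  have := sum_excess_le_sum_excess_sylvester hu1 hu hM hukM hMuk _ le_rfl (by omega) B hB
  linarith [mul_le_mul_of_nonneg_left hmass hr]

end Extremal

section Optimal

variable {n : ℕ}

lemma sum_le_mul_numBins (g : Fin n → ℕ) (y : Fin n → ℝ) {W : ℝ}
    (h : ∀ b, ∑ i with g i = b, y i ≤ W) : ∑ i, y i ≤ W * numBins g := by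
  rw [← sum_fiberwise_of_maps_to (fun i _ => mem_image_of_mem g (mem_univ i)) y, numBins,
    mul_comm, ← nsmul_eq_mul]
  exact sum_le_card_nsmul _ _ _ fun b _ => h b

lemma isPacking_of_injective {a : Fin n → ℝ} (ha : ∀ i, a i ≤ 1) {f : Fin n → ℕ}
    (hf : Function.Injective f) : IsPacking a f := fun b =>
  calc ∑ i with f i = b, a i ≤ #{i | f i = b} • (1 : ℝ) := sum_le_card_nsmul _ _ _ fun i _ => ha i
    _ ≤ 1 := by
      rw [nsmul_one, Nat.cast_le_one]
      exact card_le_one.2 fun i hi j hj => hf ((mem_filter.1 hi).2.trans (mem_filter.1 hj).2.symm)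

lemma exists_isPacking_numBins_eq_optBP {a : Fin n → ℝ} (ha : ∀ i, a i ≤ 1) :
    ∃ g, IsPacking a g ∧ numBins g = optBP a :=
  Nat.sInf_mem (s := {B | ∃ f, IsPacking a f ∧ numBins f = B})
    ⟨_, Fin.val, isPacking_of_injective ha Fin.val_injective, rfl⟩

end Optimal

end BinPacking

theorem bounded_space_bin_packing_general (u : ℕ → ℕ) (hu1 : u 1 = 1)
    (hu : ∀ k, 1 ≤ k → u (k + 1) = u k * (u k + 1))
    (M k : ℕ) (hM : 2 ≤ M)
    (hukM : u k < M) (hMuk : M ≤ u (k + 1))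
    {n : ℕ} (a : Fin n → ℝ) (ha : ∀ i, a i ∈ Set.Icc (0 : ℝ) 1) :
    ∃ f : Fin n → ℕ, IsPacking a f ∧ BoundedSpacePacking M f ∧
      (numBins f : ℝ) ≤
        (∑ i ∈ Finset.Icc 1 k, (1 : ℝ) / u i + M / ((M - 1) * u (k + 1))) *
          optBP a + (M - 1) := by
  obtain ⟨g, hg, hg_opt⟩ := BinPacking.exists_isPacking_numBins_eq_optBP fun i => (ha i).2
  refine ⟨BinPacking.harmonicPacking M a, BinPacking.harmonicPacking_isPacking hM ha,
    BinPacking.harmonicPacking_boundedSpace hM ha, ?_⟩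
  have hweight : ∑ i, BinPacking.itemWeight M (a i) ≤
      (∑ i ∈ Finset.Icc 1 k, (1 : ℝ) / u i + M / ((M - 1) * u (k + 1))) * optBP a := by
    rw [← hg_opt]
    exact BinPacking.sum_le_mul_numBins g _ fun b =>
      BinPacking.sum_itemWeight_le hu1 hu hM hukM hMuk _ a (fun i _ => ha i) (hg b)
  linarith [BinPacking.numBins_harmonicPacking_le hM ha]

/-- (Lee–Lee) The sequence `u` is given by `u 1 = 1` and
`u (k+1) = u k·(u k + 1)` for `k ≥ 1`.  Let `M ≥ 2` be an integer and `k ≥ 1`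
the index with `u k < M ≤ u (k+1)`.  For every finite sequence of item sizes
in `[0,1]`, there is an `M`-bounded-space bin packing of the items using at
most `(∑_{i=1}^{k} 1/u i + M/((M-1)·u (k+1)))·opt_BP + (M-1)` bins, where
`opt_BP` is the optimal (offline) number of bins. -/
theorem bounded_space_bin_packing (u : ℕ → ℕ) (hu1 : u 1 = 1)
    (hu : ∀ k, 1 ≤ k → u (k + 1) = u k * (u k + 1))
    (M k : ℕ) (hM : 2 ≤ M) (hk : 1 ≤ k)
    (hukM : u k < M) (hMuk : M ≤ u (k + 1))
    {n : ℕ} (a : Fin n → ℝ) (ha : ∀ i, a i ∈ Set.Icc (0 : ℝ) 1) :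
    ∃ f : Fin n → ℕ, IsPacking a f ∧ BoundedSpacePacking M f ∧
      (numBins f : ℝ) ≤
        (∑ i ∈ Finset.Icc 1 k, (1 : ℝ) / u i + M / ((M - 1) * u (k + 1))) *
          optBP a + (M - 1) :=
  bounded_space_bin_packing_general u hu1 hu M k hM hukM hMuk a ha
end

section
/- Fix integers k ≥ 1 and Γ ≥ 1. For each i ∈ {1, …, k}, set x_i := k·u_{k+1}/(u_i + 1) + 1 (an integer since u_i + 1 divides u_{k+1}) and D := 2k·u_{k+1}, and consider a collection of items of k types consisting of Γ·u_k items of each type i, where each item of type i has size 2·x_i. Then: (i) the items can be partitioned into exactly Γ·u_k parts, each containing one item of every type, and each part has total size exactly D; (ii) every partition of the items into parts such that each part contains items of a single type and each part has total size at most D consists of at least Γ·u_k · Σ_{i=1}^{k} 1/u_i parts. -/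
/-!
Since `u i + 1` is Sylvester's sequence, `∑_{i ≤ k} 1/(u i + 1) + 1/u (k+1) = 1`; multiplied by
`2k·u (k+1)` this says that one item of each type fills a part of size `D` exactly.
For the lower bound, `D < (u i + 1)·(2 x i)`, so a part holding only items of type `i` holds at
most `u i` of them, and the `Γ·u k` items of type `i` need at least `Γ·u k / u i` parts.
-/

open Finset

theorem Fin.sum_univ_add_one_eq_sum_Icc {M : Type*} [AddCommMonoid M] (f : ℕ → M) (k : ℕ) :
    ∑ i : Fin k, f (i + 1) = ∑ i ∈ Icc 1 k, f i := by
  induction k with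
  | zero => simp
  | succ n ih => rw [Fin.sum_univ_castSucc, sum_Icc_succ_top (by omega)]; simp [ih]

section BinPacking

variable {ι κ γ : Type*} [Fintype ι] [Fintype κ] [DecidableEq γ]
  (w c : ι → ℕ) (D : ℕ) (Q : ι × κ → γ)

theorem card_le_mul_card_image_of_capacity (hw : ∀ i, D < (c i + 1) * w i)
    (hD : ∀ p ∈ univ.image Q, ∑ a ∈ univ.filter (Q · = p), w a.1 ≤ D) (i : ι) :
    Fintype.card κ ≤ c i * #(univ.image fun j => Q (i, j)) := by
  refine card_le_mul_card_image _ _ fun p hp => Nat.lt_succ_iff.1 ?_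
  obtain ⟨j, -, rfl⟩ := mem_image.1 hp
  have hfiber : #{j' | Q (i, j') = Q (i, j)} * w i ≤ D :=
    calc #{j' | Q (i, j') = Q (i, j)} * w i
        = ∑ a ∈ (univ.filter fun j' => Q (i, j') = Q (i, j)).map (.sectR i κ), w a.1 := by
          simp
      _ ≤ ∑ a ∈ univ.filter (Q · = Q (i, j)), w a.1 :=
          sum_le_sum_of_subset fun a ha => by
            obtain ⟨j', hj', rfl⟩ := mem_map.1 ha
            simpa using hj'
      _ ≤ D := hD _ (mem_image_of_mem _ (mem_univ _))
  exact lt_of_mul_lt_mul_right (hfiber.trans_lt (hw i)) (Nat.zero_le _)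

theorem sum_card_image_le_card_image [DecidableEq ι] (hQ : ∀ a b, Q a = Q b → a.1 = b.1) :
    ∑ i, #(univ.image fun j => Q (i, j)) ≤ #(univ.image Q) := by
  rw [← card_biUnion]
  · exact card_le_card <| biUnion_subset.2 fun i _ =>
      image_subset_iff.2 fun j _ => mem_image_of_mem _ (mem_univ _)
  · intro i _ i' _ hii'
    simp only [Function.onFun, disjoint_left, mem_image, mem_univ, true_and]
    rintro _ ⟨j, rfl⟩ ⟨j', h⟩
    exact hii' (hQ _ _ h).symm

theorem sum_card_div_le_card_image [DecidableEq ι] (hw : ∀ i, D < (c i + 1) * w i)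
    (hQ : ∀ a b, Q a = Q b → a.1 = b.1)
    (hD : ∀ p ∈ univ.image Q, ∑ a ∈ univ.filter (Q · = p), w a.1 ≤ D) :
    ∑ i, (Fintype.card κ : ℝ) / c i ≤ #(univ.image Q) :=
  calc ∑ i, (Fintype.card κ : ℝ) / c i
      ≤ ∑ i, (#(univ.image fun j => Q (i, j)) : ℝ) := sum_le_sum fun i _ =>
        div_le_of_le_mul₀ (by positivity) (by positivity) <| by
          exact_mod_cast
            (card_le_mul_card_image_of_capacity w c D Q hw hD i).trans_eq (mul_comm _ _)
    _ ≤ #(univ.image Q) := by exact_mod_cast sum_card_image_le_card_image Q hQ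

end BinPacking

namespace SylvesterMinusOne

variable {u : ℕ → ℕ}

theorem succ_dvd_of_lt (hu : ∀ k, 1 ≤ k → u (k + 1) = u k * (u k + 1))
    {i j : ℕ} (hi : 1 ≤ i) (hij : i < j) : u i + 1 ∣ u j := by
  induction j, hij using Nat.le_induction with
  | base => exact ⟨u i, by rw [hu i hi, mul_comm]⟩
  | succ n hn ih => exact ih.trans ⟨u n + 1, hu n (by omega)⟩

-- The Sylvester identity `∑_{i ≤ k} 1/(u i + 1) = 1 - 1/u (k+1)`, cleared of denominators.
theorem sum_div_succ_add_one (hu : ∀ k, 1 ≤ k → u (k + 1) = u k * (u k + 1))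
    (hu1 : u 1 = 1) (k : ℕ) :
    ∑ i ∈ Icc 1 k, u (k + 1) / (u i + 1) + 1 = u (k + 1) := by
  induction k with
  | zero => simp [hu1]
  | succ n ih =>
    have hlast : u (n + 1 + 1) / (u (n + 1) + 1) = u (n + 1) := by
      rw [hu (n + 1) (by omega), Nat.mul_div_cancel _ (Nat.succ_pos _)]
    have hearlier : ∀ i ∈ Icc 1 n,
        u (n + 1 + 1) / (u i + 1) = (u (n + 1) + 1) * (u (n + 1) / (u i + 1)) := fun i hi => by
      rw [hu (n + 1) (by omega), mul_comm,
        Nat.mul_div_assoc _ (succ_dvd_of_lt hu (mem_Icc.1 hi).1 (by grind))]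
    rw [sum_Icc_succ_top (by omega), sum_congr rfl hearlier, ← mul_sum, hlast,
      hu (n + 1) (by omega)]
    calc (u (n + 1) + 1) * ∑ i ∈ Icc 1 n, u (n + 1) / (u i + 1) + u (n + 1) + 1
        = (u (n + 1) + 1) * (∑ i ∈ Icc 1 n, u (n + 1) / (u i + 1) + 1) := by ring
      _ = u (n + 1) * (u (n + 1) + 1) := by rw [ih, mul_comm]

theorem sum_two_mul_div_succ_add_one (hu : ∀ k, 1 ≤ k → u (k + 1) = u k * (u k + 1))
    (hu1 : u 1 = 1) (k : ℕ) :
    ∑ i ∈ Icc 1 k, 2 * (k * u (k + 1) / (u i + 1) + 1) = 2 * k * u (k + 1) := by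
  have hdiv : ∀ i ∈ Icc 1 k, k * u (k + 1) / (u i + 1) = k * (u (k + 1) / (u i + 1)) :=
    fun i hi => Nat.mul_div_assoc _ (succ_dvd_of_lt hu (mem_Icc.1 hi).1 (by grind))
  calc ∑ i ∈ Icc 1 k, 2 * (k * u (k + 1) / (u i + 1) + 1)
      = ∑ i ∈ Icc 1 k, (2 * k * (u (k + 1) / (u i + 1)) + 2) :=
        sum_congr rfl fun i hi => by rw [hdiv i hi]; ring
    _ = 2 * k * (∑ i ∈ Icc 1 k, u (k + 1) / (u i + 1) + 1) := by
        rw [sum_add_distrib, ← mul_sum, sum_const, Nat.card_Icc, Nat.add_sub_cancel, smul_eq_mul]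
        ring
    _ = 2 * k * u (k + 1) := by rw [sum_div_succ_add_one hu hu1 k]

end SylvesterMinusOne

theorem lower_bound_instance_general (u : ℕ → ℕ) (hu1 : u 1 = 1)
    (hu : ∀ k, 1 ≤ k → u (k + 1) = u k * (u k + 1))
    (k Γ : ℕ) :
    (∃ P : Fin k × Fin (Γ * u k) → Fin (Γ * u k),
      (∀ p : Fin (Γ * u k), ∀ i : Fin k,
        ∃! j : Fin (Γ * u k), P (i, j) = p) ∧
      (∀ p : Fin (Γ * u k),
        ∑ itm ∈ Finset.univ.filter (fun itm : Fin k × Fin (Γ * u k) => P itm = p),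
            2 * (k * u (k + 1) / (u (itm.1.val + 1) + 1) + 1)
          = 2 * k * u (k + 1)))
    ∧
    (∀ Q : Fin k × Fin (Γ * u k) → ℕ,
      (∀ itm itm' : Fin k × Fin (Γ * u k), Q itm = Q itm' → itm.1 = itm'.1) →
      (∀ p ∈ Finset.univ.image Q,
        ∑ itm ∈ Finset.univ.filter (fun itm : Fin k × Fin (Γ * u k) => Q itm = p),
            2 * (k * u (k + 1) / (u (itm.1.val + 1) + 1) + 1)
          ≤ 2 * k * u (k + 1)) →
      (Γ * u k : ℝ) * ∑ i ∈ Finset.Icc 1 k, (1 : ℝ) / u i ≤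
        ((Finset.univ.image Q).card : ℝ)) := by
  set w : ℕ → ℕ := fun i => 2 * (k * u (k + 1) / (u i + 1) + 1)
  refine ⟨⟨Prod.snd, fun p _ => ⟨p, rfl, fun _ h => h⟩, fun p => ?_⟩, fun Q hQ hD => ?_⟩
  · rw [sum_filter, Fintype.sum_prod_type]
    simp only [sum_ite_eq', mem_univ, if_true]
    rw [Fin.sum_univ_add_one_eq_sum_Icc w, SylvesterMinusOne.sum_two_mul_div_succ_add_one hu hu1 k]
  · have hw (i : Fin k) : 2 * k * u (k + 1) < (u (i + 1) + 1) * w (i + 1) := by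
      have := Nat.lt_mul_div_succ (k * u (k + 1)) (Nat.succ_pos (u (i + 1)))
      simp only [w]
      linarith
    calc (Γ * u k : ℝ) * ∑ i ∈ Icc 1 k, (1 : ℝ) / u i
        = ∑ i : Fin k, (Fintype.card (Fin (Γ * u k)) : ℝ) / u (i + 1) := by
          rw [Fin.sum_univ_add_one_eq_sum_Icc fun i => (Fintype.card (Fin (Γ * u k)) : ℝ) / u i,
            mul_sum]
          simp [div_eq_mul_inv]
      _ ≤ #(univ.image Q) :=
          sum_card_div_le_card_image (fun i : Fin k => w (i + 1)) _ _ Q hw hQ hD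

/-- The combinatorial core of the lower-bound instance `I_k`.  The sequence
`u` is given by `u 1 = 1` and `u (k+1) = u k·(u k + 1)` for `k ≥ 1`.  Fix
`k ≥ 1` and `Γ ≥ 1`.  For `i ∈ {1,…,k}` set `x i := k·u (k+1)/(u i + 1) + 1`
and `D := 2·k·u (k+1)`.  The items are indexed by `Fin k × Fin (Γ·u k)`:
there are `Γ·u k` items of each type `i`, and each item of type `i` has size
`2·x i`.  Then:
(i) the items can be partitioned into exactly `Γ·u k` parts, each containing
exactly one item of every type, and each part having total size exactly `D`;
(ii) every partition of the items into parts containing items of a single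
type, with each part of total size at most `D`, has at least
`Γ·u k·∑_{i=1}^{k} 1/u i` parts. -/
theorem lower_bound_instance (u : ℕ → ℕ) (hu1 : u 1 = 1)
    (hu : ∀ k, 1 ≤ k → u (k + 1) = u k * (u k + 1))
    (k Γ : ℕ) (hk : 1 ≤ k) (hΓ : 1 ≤ Γ) :
    (∃ P : Fin k × Fin (Γ * u k) → Fin (Γ * u k),
      (∀ p : Fin (Γ * u k), ∀ i : Fin k,
        ∃! j : Fin (Γ * u k), P (i, j) = p) ∧
      (∀ p : Fin (Γ * u k),
        ∑ itm ∈ Finset.univ.filter (fun itm : Fin k × Fin (Γ * u k) => P itm = p),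
            2 * (k * u (k + 1) / (u (itm.1.val + 1) + 1) + 1)
          = 2 * k * u (k + 1)))
    ∧
    (∀ Q : Fin k × Fin (Γ * u k) → ℕ,
      (∀ itm itm' : Fin k × Fin (Γ * u k), Q itm = Q itm' → itm.1 = itm'.1) →
      (∀ p ∈ Finset.univ.image Q,
        ∑ itm ∈ Finset.univ.filter (fun itm : Fin k × Fin (Γ * u k) => Q itm = p),
            2 * (k * u (k + 1) / (u (itm.1.val + 1) + 1) + 1)
          ≤ 2 * k * u (k + 1)) →
      (Γ * u k : ℝ) * ∑ i ∈ Finset.Icc 1 k, (1 : ℝ) / u i ≤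
        ((Finset.univ.image Q).card : ℝ)) :=
  lower_bound_instance_general u hu1 hu k Γ
end
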